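/- Let F be a field of characteristic 0, n ≥ 1, d ≥ 1. For an element m of the free magma on Fin n of degree d' ≤ d, define ψ(m) := Σ_ε Π_{t=1}^{d'} z_{σ_{m_ε}(t), t, l^{m_ε}_t} ∈ R, the sum over all choices ε of a Boolean for each internal node of m. Then: (i) ψ(m) ≠ 0; (ii) if m ≈ m' then ψ(m) = ψ(m'); and (iii) if m and m' are monomials of degree ≤ d with m ≉ m', then the sets of monomials occurring with nonzero coefficient in ψ(m) and in ψ(m') are disjoint; in particular ψ(m) ≠ ψ(m'). -/

import Mathlib

/-!
Rename `z_{i,t,l}` to `((i, l), t)`. For `deg m ≤ d` no index is truncated, and the monomial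
of `m` becomes the multiset of its leaves, each tagged by its label, level and position; `ψ(m)` is
the sum of these monomials over the variants `m_ε`, all with coefficient `1`. In characteristic
`0` nothing cancels, so the support of `ψ(m)` is the set of exponents of the variants of `m`.
The leaf sequence (label, level) determines the tree: the first leaf of a tree rooted at level
`s` is at level `s` only if the tree is a single leaf, so these sequences form a prefix code.
Hence a common monomial of `ψ(m)` and `ψ(m')` comes from a common variant, and variants of `m`
are `≈ m`; conversely `≈` does not change the multiset of variants.
-/

noncomputable section

open scoped BigOperators

namespace NAPIT

/-- The list of (leaf label, leaf level) pairs of a nonassociative monomial (element of the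
free magma), in left-to-right order, where the root of the monomial is at level `s`. -/
def leafData {n : ℕ} : FreeMagma (Fin n) → ℕ → List (Fin n × ℕ)
  | FreeMagma.of i, s => [(i, s)]
  | FreeMagma.mul x y, s => leafData x (s + 1) ++ leafData y (s + 1)

/-- The degree (number of leaves) of a nonassociative monomial. -/
def degM {n : ℕ} : FreeMagma (Fin n) → ℕ
  | FreeMagma.of _ => 1
  | FreeMagma.mul x y => degM x + degM y

/-- The depth of a nonassociative monomial (root at level 1; the depth is the maximal level
of a leaf). -/
def depthM {n : ℕ} : FreeMagma (Fin n) → ℕ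
  | FreeMagma.of _ => 1
  | FreeMagma.mul x y => max (depthM x) (depthM y) + 1

/-- Evaluation of a nonassociative monomial at `b : Fin n → A`, using `mul` as the product on
`A`; this is the unique magma homomorphism `FreeMagma (Fin n) → (A, mul)` with `x_i ↦ b i`. -/
def evalWith {n : ℕ} {A : Type*} (mul : A → A → A) (b : Fin n → A) : FreeMagma (Fin n) → A
  | FreeMagma.of i => b i
  | FreeMagma.mul x y => mul (evalWith mul b x) (evalWith mul b y)

/-- The multiset of all variants `m_ε` of a monomial `m`, where `ε` ranges over all choices of
a Boolean for each internal node of `m`, and `m_ε` is obtained from `m` by swapping the two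
children at exactly those internal nodes where `ε` is true (counted with multiplicity). -/
def variants {n : ℕ} : FreeMagma (Fin n) → Multiset (FreeMagma (Fin n))
  | FreeMagma.of i => {FreeMagma.of i}
  | FreeMagma.mul x y =>
      (variants x).bind fun x' => (variants y).bind fun y' =>
        {FreeMagma.mul x' y', FreeMagma.mul y' x'}

/-- The underlying module of the algebra `A'_d(R)`: arrays `x[i,j,k]` with
`i, j ∈ Fin (d+1)`, `k ∈ Fin d` (zero-based; the paper's indices are shifted by one). -/
def Arr (d : ℕ) (R : Type*) : Type _ := Fin (d + 1) → Fin (d + 1) → Fin d → R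

namespace Arr

variable {d : ℕ} {R : Type*}

instance instAddCommGroup [AddCommGroup R] : AddCommGroup (Arr d R) :=
  inferInstanceAs (AddCommGroup (Fin (d + 1) → Fin (d + 1) → Fin d → R))

instance instModule {S : Type*} [Semiring S] [AddCommGroup R] [Module S R] :
    Module S (Arr d R) :=
  inferInstanceAs (Module S (Fin (d + 1) → Fin (d + 1) → Fin d → R))

/-- The bilinear product `∘` of `A'_d(R)`:
`(x ∘ y)[i,j,k] = ∑_{l} x[i,l,k+1] * y[l,j,k+1]` if `k+1` is a legal third index, else `0`. -/
def aprod [CommRing R] (x y : Arr d R) : Arr d R := fun i j k =>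
  if h : (k : ℕ) + 1 < d then
    ∑ l : Fin (d + 1), x i l ⟨(k : ℕ) + 1, h⟩ * y l j ⟨(k : ℕ) + 1, h⟩
  else 0

instance instMul [CommRing R] : Mul (Arr d R) := ⟨aprod⟩

end Arr

/-- The algebra `C'_d(R)`: same underlying module as `A'_d(R)`, with the anticommutator
product `a ⊙ b = a ∘ b + b ∘ a`. -/
def CArr (d : ℕ) (R : Type*) : Type _ := Arr d R

namespace CArr

variable {d : ℕ} {R : Type*}

/-- The identity map `A'_d(R) → C'_d(R)` of underlying modules. -/
def ofArr (x : Arr d R) : CArr d R := x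

/-- The identity map `C'_d(R) → A'_d(R)` of underlying modules. -/
def toArr (x : CArr d R) : Arr d R := x

instance instAddCommGroup [AddCommGroup R] : AddCommGroup (CArr d R) :=
  inferInstanceAs (AddCommGroup (Arr d R))

instance instModule {S : Type*} [Semiring S] [AddCommGroup R] [Module S R] :
    Module S (CArr d R) :=
  inferInstanceAs (Module S (Arr d R))

instance instMul [CommRing R] : Mul (CArr d R) :=
  ⟨fun a b => ofArr (toArr a * toArr b + toArr b * toArr a)⟩

end CArr

/-- The element `Z_i ∈ A'_d(R)`, `R = MvPolynomial (Fin n × Fin d × Fin d) F`, whose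
`(j, j+1, k)` entry is the indeterminate `z_{i,j,k}` and whose other entries vanish. -/
def Z (F : Type*) [CommRing F] (n d : ℕ) (i : Fin n) :
    Arr d (MvPolynomial (Fin n × Fin d × Fin d) F) := fun j j' k =>
  if h : (j : ℕ) < d ∧ (j' : ℕ) = (j : ℕ) + 1 then
    MvPolynomial.X (i, ⟨(j : ℕ), h.1⟩, k)
  else 0

/-- The element `Z_i` regarded as an element of `C'_d(R)`. -/
def ZC (F : Type*) [CommRing F] (n d : ℕ) (i : Fin n) :
    CArr d (MvPolynomial (Fin n × Fin d × Fin d) F) := CArr.ofArr (Z F n d i)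

/-- The monomial `∏_{t=1}^{d'} z_{σ_m(t), (t-1) + k1, (l^m_t - 1) + k2}` associated to a
nonassociative monomial `m` of degree `d'` and offsets `k1, k2` (all indices zero-based; the
paper's 1-based offsets are `k1 + 1`, `k2 + 1`).  Indices which would fall out of range are
discarded (this never happens in the intended range of parameters). -/
def monProd (F : Type*) [CommRing F] {n : ℕ} (d : ℕ) (k1 k2 : ℕ) (m : FreeMagma (Fin n)) :
    MvPolynomial (Fin n × Fin d × Fin d) F :=
  ((((leafData m 1).zipIdx).map Prod.swap).map fun p =>
    if h : p.1 + k1 < d ∧ p.2.2 - 1 + k2 < d then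
      MvPolynomial.X (p.2.1, ⟨p.1 + k1, h.1⟩, ⟨p.2.2 - 1 + k2, h.2⟩)
    else 0).prod

/-- `ψ(m) = ∑_ε ∏_{t=1}^{d'} z_{σ_{m_ε}(t), t, l^{m_ε}_t}` (1-based), the sum running over all
choices `ε` of a Boolean for each internal node of `m`. -/
def psi (F : Type*) [CommRing F] {n : ℕ} (d : ℕ) (m : FreeMagma (Fin n)) :
    MvPolynomial (Fin n × Fin d × Fin d) F :=
  ((variants m).map fun m' => monProd F d 0 0 m').sum

/-- The coefficient function of an element of the free nonunital nonassociative algebra. -/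
def coeffOf {F : Type*} [Semiring F] {n : ℕ}
    (f : FreeNonUnitalNonAssocAlgebra F (Fin n)) : FreeMagma (Fin n) →₀ F := f.coeff

/-- Evaluation of an element of the free nonunital nonassociative algebra on `x_1, …, x_n` at
the tuple `b`, with `mul` as the product of the target: the linear extension of
`m ↦ evalWith mul b m`, i.e. the unique nonunital `F`-algebra homomorphism sending
`x_i ↦ b i` into `(A, mul)`. -/
def evalNAWith {F : Type*} [Semiring F] {n : ℕ} {A : Type*}
    [AddCommMonoid A] [Module F A] (mul : A → A → A) (b : Fin n → A)
    (f : FreeNonUnitalNonAssocAlgebra F (Fin n)) : A :=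
  Finsupp.sum (coeffOf f) fun m c => c • evalWith mul b m

/-- Evaluation of an element of the free nonunital nonassociative algebra at a tuple `b` of
elements of a (not necessarily unital/associative) algebra `A`: the unique nonunital
`F`-algebra homomorphism sending `x_i ↦ b i`. -/
def evalNA {F : Type*} [Semiring F] {n : ℕ} {A : Type*}
    [AddCommMonoid A] [Mul A] [Module F A] (b : Fin n → A)
    (f : FreeNonUnitalNonAssocAlgebra F (Fin n)) : A :=
  evalNAWith (· * ·) b f

/-- Evaluation of an element of the unitization of the free nonunital nonassociative algebra
at a tuple `b` of elements of the unitization of `A`: the unique unital `F`-algebra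
homomorphism sending `x_i ↦ b i` (and the adjoined unit to the unit). -/
def evalUnit {F : Type*} [CommSemiring F] {n : ℕ} {A : Type*}
    [AddCommMonoid A] [Mul A] [Module F A] (b : Fin n → Unitization F A)
    (f : Unitization F (FreeNonUnitalNonAssocAlgebra F (Fin n))) : Unitization F A :=
  Unitization.inl f.fst + evalNA b f.snd

/-- The commutativity congruence on the free magma: the smallest equivalence relation with
`m₁ * m₂ ≈ m₂ * m₁` and compatible with the product. -/
inductive CommEq {n : ℕ} : FreeMagma (Fin n) → FreeMagma (Fin n) → Prop
  | refl (m : FreeMagma (Fin n)) : CommEq m m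
  | symm {a b : FreeMagma (Fin n)} : CommEq a b → CommEq b a
  | trans {a b c : FreeMagma (Fin n)} : CommEq a b → CommEq b c → CommEq a c
  | comm (a b : FreeMagma (Fin n)) : CommEq (a * b) (b * a)
  | mul_congr {a a' b b' : FreeMagma (Fin n)} :
      CommEq a a' → CommEq b b' → CommEq (a * b) (a' * b')

/-- The basis monomial `m` of the free nonunital nonassociative algebra. -/
def single1 (F : Type*) [Semiring F] {n : ℕ} (m : FreeMagma (Fin n)) :
    FreeNonUnitalNonAssocAlgebra F (Fin n) :=
  MonoidAlgebra.ofCoeff (Finsupp.single m 1 : FreeMagma (Fin n) →₀ F)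

/-- `I_comm`: the `F`-linear span of `{m − m' : m ≈ m'}` inside the free nonunital
nonassociative algebra. -/
def Icomm (F : Type*) [Field F] (n : ℕ) :
    Submodule F (FreeNonUnitalNonAssocAlgebra F (Fin n)) :=
  Submodule.span F
    {x | ∃ m m' : FreeMagma (Fin n), CommEq m m' ∧ x = single1 F m - single1 F m'}

end NAPIT

theorem List.eq_of_perm_zipIdx {α : Type*} {l₁ l₂ : List α} (h : l₁.zipIdx.Perm l₂.zipIdx) :
    l₁ = l₂ :=
  List.ext_getElem? fun i => Option.ext fun x => by
    simpa only [List.mk_mem_zipIdx_iff_getElem?] using h.mem_iff (a := (x, i))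

namespace MvPolynomial

variable {σ R : Type*} [CommSemiring R]

theorem prod_map_X [DecidableEq σ] (l : List σ) :
    (l.map X).prod = monomial (Multiset.toFinsupp (l : Multiset σ)) (1 : R) := by
  induction l with
  | nil => simp
  | cons a l ih =>
    rw [List.map_cons, List.prod_cons, ih, ← Multiset.cons_coe, ← Multiset.singleton_add,
      Multiset.toFinsupp_add, Multiset.toFinsupp_singleton, X, monomial_mul, one_mul]

theorem coeff_sum_monomial_one [DecidableEq σ] (s : Multiset (σ →₀ ℕ)) (μ : σ →₀ ℕ) :
    ((s.map fun e => monomial e (1 : R)).sum).coeff μ = s.count μ := by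
  induction s using Multiset.induction_on with
  | empty => simp
  | cons e s ih =>
    rw [Multiset.map_cons, Multiset.sum_cons, coeff_add, ih, coeff_monomial,
      Multiset.count_cons]
    rcases eq_or_ne e μ with rfl | h
    · simp [add_comm]
    · simp [h, h.symm]

theorem support_sum_monomial_one [CharZero R] [DecidableEq σ] (s : Multiset (σ →₀ ℕ)) :
    ((s.map fun e => monomial e (1 : R)).sum).support = s.toFinset := by
  ext μ
  rw [mem_support_iff, coeff_sum_monomial_one, Nat.cast_ne_zero, Multiset.mem_toFinset,
    Multiset.count_ne_zero]

end MvPolynomial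

namespace NAPIT

section LeafData

variable {n : ℕ}

@[simp]
theorem leafData_of (i : Fin n) (s : ℕ) : leafData (FreeMagma.of i) s = [(i, s)] := rfl

@[simp]
theorem leafData_mul (x y : FreeMagma (Fin n)) (s : ℕ) :
    leafData (x * y) s = leafData x (s + 1) ++ leafData y (s + 1) := rfl

@[simp]
theorem degM_mul (x y : FreeMagma (Fin n)) : degM (x * y) = degM x + degM y := rfl

theorem one_le_degM (m : FreeMagma (Fin n)) : 1 ≤ degM m := by
  induction m with
  | ih1 => exact le_rfl
  | ih2 x y _ _ => exact le_add_right ‹1 ≤ degM x›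

theorem length_leafData (m : FreeMagma (Fin n)) (s : ℕ) : (leafData m s).length = degM m := by
  induction m generalizing s with
  | ih1 => rfl
  | ih2 x y ihx ihy => simp [leafData, degM, ihx, ihy]

theorem leafData_ne_nil (m : FreeMagma (Fin n)) (s : ℕ) : leafData m s ≠ [] := by
  rw [← List.length_pos_iff, length_leafData]
  exact one_le_degM m

theorem mem_leafData_level {m : FreeMagma (Fin n)} {s : ℕ} {p : Fin n × ℕ}
    (hp : p ∈ leafData m s) : s ≤ p.2 ∧ p.2 < s + degM m := by
  induction m generalizing s with
  | ih1 => simp_all [leafData, degM]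
  | ih2 x y ihx ihy =>
    have := one_le_degM x
    have := one_le_degM y
    rw [leafData_mul, List.mem_append] at hp
    rcases hp with hp | hp
    · have := ihx hp; rw [degM_mul]; omega
    · have := ihy hp; rw [degM_mul]; omega

theorem leafData_of_append_ne_mul (i : Fin n) (x y : FreeMagma (Fin n)) (s : ℕ)
    (r r' : List (Fin n × ℕ)) : leafData (FreeMagma.of i) s ++ r ≠ leafData (x * y) s ++ r' := by
  intro h
  obtain ⟨p, l, hx⟩ := List.exists_cons_of_ne_nil (leafData_ne_nil x (s + 1))
  have hp := (mem_leafData_level (hx ▸ List.mem_cons_self : p ∈ leafData x (s + 1))).1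
  simp only [leafData_of, leafData_mul, hx, List.cons_append, List.cons.injEq] at h
  obtain ⟨rfl, -⟩ := h
  simp at hp

theorem leafData_append_inj {m m' : FreeMagma (Fin n)} {s : ℕ} {r r' : List (Fin n × ℕ)}
    (h : leafData m s ++ r = leafData m' s ++ r') : m = m' ∧ r = r' := by
  induction m generalizing m' s r r' with
  | ih1 i =>
    cases m' with
    | of j => simp_all
    | mul x y => exact absurd h (leafData_of_append_ne_mul i x y s r r')
  | ih2 x y ihx ihy =>
    cases m' with
    | of j => exact absurd h.symm (leafData_of_append_ne_mul j x y s r' r)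
    | mul x' y' =>
      simp only [leafData, List.append_assoc] at h
      obtain ⟨rfl, hy⟩ := ihx h
      obtain ⟨rfl, rfl⟩ := ihy hy
      exact ⟨rfl, rfl⟩

theorem leafData_injective (s : ℕ) :
    Function.Injective fun m : FreeMagma (Fin n) => leafData m s := fun _ _ h =>
  (leafData_append_inj (r := []) (r' := []) (by simpa using h)).1

def leafExponent (m : FreeMagma (Fin n)) : (Fin n × ℕ) × ℕ →₀ ℕ :=
  Multiset.toFinsupp ((leafData m 1).zipIdx : Multiset _)

theorem leafExponent_injective : Function.Injective (leafExponent (n := n)) := fun _ _ h =>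
  leafData_injective 1 <| List.eq_of_perm_zipIdx <|
    Multiset.coe_eq_coe.mp (Multiset.toFinsupp.injective h)

end LeafData

section Variants

variable {n : ℕ}

theorem mem_variants_mul {x y m : FreeMagma (Fin n)} :
    m ∈ variants (x * y) ↔ ∃ x' ∈ variants x, ∃ y' ∈ variants y, m = x' * y' ∨ m = y' * x' := by
  simp only [variants, Multiset.mem_bind, Multiset.insert_eq_cons, Multiset.mem_cons,
    Multiset.mem_singleton]
  rfl

theorem self_mem_variants (m : FreeMagma (Fin n)) : m ∈ variants m := by
  induction m with
  | ih1 => exact Multiset.mem_singleton_self _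
  | ih2 x y hx hy => exact mem_variants_mul.mpr ⟨x, hx, y, hy, Or.inl rfl⟩

theorem commEq_of_mem_variants {m m' : FreeMagma (Fin n)} (h : m' ∈ variants m) :
    CommEq m' m := by
  induction m generalizing m' with
  | ih1 => rw [Multiset.mem_singleton.mp h]; exact CommEq.refl _
  | ih2 x y ihx ihy =>
    obtain ⟨x', hx', y', hy', rfl | rfl⟩ := mem_variants_mul.mp h
    · exact CommEq.mul_congr (ihx hx') (ihy hy')
    · exact (CommEq.comm y' x').trans (CommEq.mul_congr (ihx hx') (ihy hy'))

theorem CommEq.degM_eq {m m' : FreeMagma (Fin n)} (h : CommEq m m') : degM m = degM m' := by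
  induction h with
  | refl => rfl
  | symm _ ih => exact ih.symm
  | trans _ _ ih₁ ih₂ => exact ih₁.trans ih₂
  | comm a b => exact Nat.add_comm _ _
  | mul_congr _ _ ih₁ ih₂ => simp only [degM_mul, ih₁, ih₂]

theorem CommEq.variants_eq {m m' : FreeMagma (Fin n)} (h : CommEq m m') :
    variants m = variants m' := by
  induction h with
  | refl => rfl
  | symm _ ih => exact ih.symm
  | trans _ _ ih₁ ih₂ => exact ih₁.trans ih₂
  | comm a b =>
    show variants (FreeMagma.mul a b) = variants (FreeMagma.mul b a)
    rw [variants, variants, Multiset.bind_bind]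
    exact Multiset.bind_congr fun _ _ => Multiset.bind_congr fun _ _ => Multiset.cons_swap _ _ _
  | mul_congr _ _ ih₁ ih₂ =>
    show variants (FreeMagma.mul _ _) = variants (FreeMagma.mul _ _)
    rw [variants, variants, ih₁, ih₂]

end Variants

section Psi

open MvPolynomial

variable {n d : ℕ} {F : Type*}

/-- `z_{i,t,k}` (zero-based) is renamed to `((i, k + 1), t)`: label, level and position of a
leaf. -/
def toLeafVar (d : ℕ) (v : Fin n × Fin d × Fin d) : (Fin n × ℕ) × ℕ := ((v.1, v.2.2 + 1), v.2.1)

theorem toLeafVar_injective : Function.Injective (toLeafVar (n := n) d) := by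
  rintro ⟨i, t, k⟩ ⟨i', t', k'⟩ h
  simp only [toLeafVar, Prod.mk.injEq, add_left_inj] at h
  obtain ⟨⟨rfl, hk⟩, ht⟩ := h
  rw [Fin.ext ht, Fin.ext hk]

variable [CommRing F]

theorem CommEq.psi_eq {m m' : FreeMagma (Fin n)} (h : CommEq m m') : psi F d m = psi F d m' := by
  rw [psi, psi, h.variants_eq]

theorem rename_monProd {m : FreeMagma (Fin n)} (hm : degM m ≤ d) :
    rename (toLeafVar d) (monProd F d 0 0 m) = monomial (leafExponent m) 1 := by
  rw [monProd, map_list_prod, List.map_map, List.map_map, leafExponent, ← prod_map_X]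
  congr 1
  refine List.map_congr_left fun p hp => ?_
  obtain ⟨⟨i, l⟩, t⟩ := p
  have hl : 1 ≤ l ∧ l < 1 + degM m := mem_leafData_level (List.fst_mem_of_mem_zipIdx hp)
  have ht : t < degM m := by simpa [length_leafData] using List.snd_lt_of_mem_zipIdx hp
  simp only [Function.comp_apply, Prod.swap_prod_mk, add_zero,
    dif_pos (show t < d ∧ l - 1 < d by omega), rename_X, toLeafVar, Nat.sub_add_cancel hl.1]

theorem rename_psi {m : FreeMagma (Fin n)} (hm : degM m ≤ d) :
    rename (toLeafVar d) (psi F d m) =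
      ((variants m).map fun m' => monomial (leafExponent m') 1).sum := by
  rw [psi, map_multiset_sum, Multiset.map_map]
  refine congrArg _ (Multiset.map_congr rfl fun m' hm' => ?_)
  exact rename_monProd ((commEq_of_mem_variants hm').degM_eq.trans_le hm)

theorem support_rename_psi [CharZero F] {m : FreeMagma (Fin n)} (hm : degM m ≤ d) :
    (rename (toLeafVar d) (psi F d m)).support = ((variants m).map leafExponent).toFinset := by
  rw [rename_psi hm, ← support_sum_monomial_one (R := F), Multiset.map_map]
  rfl

theorem psi_ne_zero [CharZero F] {m : FreeMagma (Fin n)} (hm : degM m ≤ d) : psi F d m ≠ 0 := by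
  intro h
  have := support_rename_psi (F := F) hm
  rw [h, map_zero, support_zero, eq_comm, Multiset.toFinset_eq_empty, Multiset.map_eq_zero] at this
  exact Multiset.notMem_zero _ (this ▸ self_mem_variants m)

theorem disjoint_support_psi [CharZero F] {m m' : FreeMagma (Fin n)} (hm : degM m ≤ d)
    (hm' : degM m' ≤ d) (h : ¬ CommEq m m') :
    Disjoint (psi F d m).support (psi F d m').support := by
  classical
  rw [← Finset.disjoint_image (Finsupp.mapDomain_injective (toLeafVar_injective (d := d))),
    ← support_rename_of_injective toLeafVar_injective,
    ← support_rename_of_injective toLeafVar_injective, support_rename_psi hm,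
    support_rename_psi hm', Finset.disjoint_left]
  simp only [Multiset.mem_toFinset, Multiset.mem_map, not_exists, not_and]
  rintro _ ⟨m₁, h₁, rfl⟩ m₂ h₂ he
  rw [leafExponent_injective he] at h₂
  exact h ((commEq_of_mem_variants h₁).symm.trans (commEq_of_mem_variants h₂))

end Psi

theorem psi_properties_general {F : Type*} [Field F] [CharZero F] (n d : ℕ) :
    (∀ m : FreeMagma (Fin n), degM m ≤ d → psi F d m ≠ 0) ∧
    (∀ m m' : FreeMagma (Fin n), degM m ≤ d → degM m' ≤ d → CommEq m m' →
        psi F d m = psi F d m') ∧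
    (∀ m m' : FreeMagma (Fin n), degM m ≤ d → degM m' ≤ d → ¬ CommEq m m' →
        Disjoint (psi F d m).support (psi F d m').support ∧
        psi F d m ≠ psi F d m') := by
  refine ⟨fun m hm => psi_ne_zero hm, fun m m' _ _ h => h.psi_eq, fun m m' hm hm' h => ?_⟩
  have hdisj := disjoint_support_psi (F := F) hm hm' h
  refine ⟨hdisj, fun he => psi_ne_zero (F := F) hm' ?_⟩
  rwa [he, Finset.disjoint_self_iff_empty, MvPolynomial.support_eq_empty] at hdisj

/-- Let `F` be a field of characteristic `0` and `n, d ≥ 1`.  For a monomial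
`m` (element of the free magma on `Fin n`) of degree `≤ d`, let
`ψ(m) := ∑_ε ∏_{t=1}^{d'} z_{σ_{m_ε}(t), t, l^{m_ε}_t} ∈ R` (sum over all choices `ε` of a
Boolean for each internal node of `m`).  Then:
(i)  `ψ(m) ≠ 0`;
(ii) if `m ≈ m'` (the commutativity congruence) then `ψ(m) = ψ(m')`; and
(iii) if `m ≉ m'` (both of degree `≤ d`), the sets of monomials occurring with nonzero
coefficient in `ψ(m)` and `ψ(m')` are disjoint; in particular `ψ(m) ≠ ψ(m')`. -/
theorem psi_properties {F : Type*} [Field F] [CharZero F] (n d : ℕ)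
    (hn : 1 ≤ n) (hd : 1 ≤ d) :
    (∀ m : FreeMagma (Fin n), degM m ≤ d → psi F d m ≠ 0) ∧
    (∀ m m' : FreeMagma (Fin n), degM m ≤ d → degM m' ≤ d → CommEq m m' →
        psi F d m = psi F d m') ∧
    (∀ m m' : FreeMagma (Fin n), degM m ≤ d → degM m' ≤ d → ¬ CommEq m m' →
        Disjoint (psi F d m).support (psi F d m').support ∧
        psi F d m ≠ psi F d m') :=
  psi_properties_general n d

end NAPIT
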